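/- The empty network on n ≥ 3 countries is war-stable (under NN-vulnerability) if and only if M({j,k}) ≤ γ({j,k},{i})·M_i for all distinct countries i, j, k. -/

import Mathlib

/-!
Adding the link `jk` to the empty network lets `j` attack any third country `i` with the pair
`{j, k}` while `i` stands alone, so (S2) forces `M {j, k} ≤ γ({j, k}, {i}) · M {i}`. Conversely,
in the empty network and in a network with a single link `jk`, an aggressor `a` can only field
`{a}` or, if `a ∈ {j, k}`, the pair `{j, k}` against an isolated country. The pair attack is
ruled out directly. A lone `a` is weaker than `{a, b}` for a third country `b`, which exists as
`n ≥ 3`, and by monotonicity of `M` and `γ` that pair cannot beat even the target alone, let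
alone a larger defending group.
-/

open Finset

/-- The allies (neighbors) of `i` in network `g`, as a `Finset`. -/
noncomputable def nbrs {V : Type*} [Fintype V] (g : SimpleGraph V) (i : V) : Finset V :=
  @Finset.filter _ (fun j => g.Adj i j) (Classical.decPred _) Finset.univ

/-- The network `g` with the alliance `jk` added. -/
def addE {V : Type*} (g : SimpleGraph V) (j k : V) : SimpleGraph V :=
  g ⊔ SimpleGraph.fromEdgeSet {s(j, k)}

/-- The network `g` with the alliance `jk` deleted. -/
def delE {V : Type*} (g : SimpleGraph V) (j k : V) : SimpleGraph V :=
  g.deleteEdges {s(j, k)}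

/-- Country `i` is (NN-)vulnerable at network `g`: some aggressor `j` together with a
coalition `C` of its allies can defeat `i` and its remaining allies. -/
def Vul {V : Type*} [Fintype V] [DecidableEq V] (g : SimpleGraph V)
    (M : Finset V → ℝ) (γ : Finset V → Finset V → ℝ) (i : V) : Prop :=
  ∃ (j : V) (C : Finset V),
    C ⊆ insert j (nbrs g j) ∧ j ∈ C ∧ i ∉ C ∧
    γ C (insert i (nbrs g i \ C)) * M (insert i (nbrs g i \ C)) < M C

/-- A network is war-stable: (S1) no country vulnerable; (S2) no country vulnerable after
adding any non-link; (S3) both endpoints of any link become vulnerable upon its deletion. -/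
def WarStable {V : Type*} [Fintype V] [DecidableEq V] (g : SimpleGraph V)
    (M : Finset V → ℝ) (γ : Finset V → Finset V → ℝ) : Prop :=
  (∀ v : V, ¬ Vul g M γ v) ∧
  (∀ j k : V, j ≠ k → ¬ g.Adj j k → ∀ v : V, ¬ Vul (addE g j k) M γ v) ∧
  (∀ j k : V, g.Adj j k → Vul (delE g j k) M γ j ∧ Vul (delE g j k) M γ k)

lemma addE_bot_adj {V : Type*} {j k a b : V} :
    (addE ⊥ j k).Adj a b ↔ s(a, b) = s(j, k) ∧ a ≠ b := by
  simp [addE]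

section Networks

variable {V : Type*} [Fintype V]

lemma mem_nbrs {g : SimpleGraph V} {i x : V} : x ∈ nbrs g i ↔ g.Adj i x := by
  simp [nbrs]

lemma nbrs_bot (i : V) : nbrs (⊥ : SimpleGraph V) i = ∅ := by
  ext x
  simp [mem_nbrs]

lemma nbrs_addE_bot_of_ne {j k a : V} (hj : a ≠ j) (hk : a ≠ k) :
    nbrs (addE ⊥ j k) a = ∅ := by
  ext x
  simp [mem_nbrs, addE_bot_adj, hj, hk]

variable [DecidableEq V]

lemma nbrs_addE_bot_subset (j k a : V) : nbrs (addE ⊥ j k) a ⊆ {j, k} := by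
  intro x hx
  rw [mem_nbrs, addE_bot_adj, Sym2.eq_iff] at hx
  grind

lemma eq_singleton_or_eq_pair_of_subset_addE_bot {j k a : V} {C : Finset V}
    (hC : C ⊆ insert a (nbrs (addE ⊥ j k) a)) (haC : a ∈ C) : C = {a} ∨ C = {j, k} := by
  by_cases ha : a = j ∨ a = k
  · have hC' : C ⊆ {j, k} := hC.trans (insert_subset (by grind) (nbrs_addE_bot_subset j k a))
    grind
  · push Not at ha
    rw [nbrs_addE_bot_of_ne ha.1 ha.2, insert_empty_eq] at hC
    exact Or.inl (subset_singleton_iff.1 hC |>.resolve_left (ne_empty_of_mem haC))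

end Networks

section Strength

variable {V : Type*} [Fintype V] [DecidableEq V] {M : Finset V → ℝ}
  {γ : Finset V → Finset V → ℝ}

lemma strength_singleton_le (hV : 3 ≤ Fintype.card V)
    (hM0 : ∀ C : Finset V, C.Nonempty → 0 ≤ M C)
    (hMmono : ∀ C C' : Finset V, C ⊆ C' → M C ≤ M C')
    (hγpos : ∀ C C' : Finset V, 0 < γ C C')
    (hγ1 : ∀ C C'' D : Finset V, C ⊆ C'' → γ C'' D ≤ γ C D)
    (hγ2 : ∀ C D D' : Finset V, D' ⊆ D → γ C D' ≤ γ C D)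
    (H : ∀ i j k : V, i ≠ j → j ≠ k → i ≠ k → M {j, k} ≤ γ {j, k} {i} * M {i})
    {a i : V} (hai : a ≠ i) {D : Finset V} (hiD : i ∈ D) :
    M {a} ≤ γ {a} D * M D := by
  obtain ⟨b, hba, hbi⟩ := ENat.exists_ne_ne_of_three_le (by simpa using hV) a i
  have hMD : 0 ≤ M D := hM0 D ⟨i, hiD⟩
  calc M {a} ≤ M {a, b} := hMmono _ _ (by simp)
    _ ≤ γ {a, b} {i} * M {i} := H i a b hai.symm hba.symm hbi.symm
    _ ≤ γ {a, b} {i} * M D :=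
        mul_le_mul_of_nonneg_left (hMmono _ _ (by simpa)) (hγpos _ _).le
    _ ≤ γ {a, b} D * M D := mul_le_mul_of_nonneg_right (hγ2 _ _ _ (by simpa)) hMD
    _ ≤ γ {a} D * M D := mul_le_mul_of_nonneg_right (hγ1 _ _ _ (by simp)) hMD

lemma vul_addE_bot_of_lt {i j k : V} (hij : i ≠ j) (hjk : j ≠ k) (hik : i ≠ k)
    (hlt : γ {j, k} {i} * M {i} < M {j, k}) : Vul (addE ⊥ j k) M γ i := by
  refine ⟨j, {j, k}, insert_subset_insert j (by simp [subset_iff, mem_nbrs, addE_bot_adj, hjk]),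
    by simp, by simp [hij, hik], ?_⟩
  rwa [nbrs_addE_bot_of_ne hij hik, empty_sdiff, insert_empty_eq]

lemma not_vul_bot (hV : 3 ≤ Fintype.card V)
    (hM0 : ∀ C : Finset V, C.Nonempty → 0 ≤ M C)
    (hMmono : ∀ C C' : Finset V, C ⊆ C' → M C ≤ M C')
    (hγpos : ∀ C C' : Finset V, 0 < γ C C')
    (hγ1 : ∀ C C'' D : Finset V, C ⊆ C'' → γ C'' D ≤ γ C D)
    (hγ2 : ∀ C D D' : Finset V, D' ⊆ D → γ C D' ≤ γ C D)
    (H : ∀ i j k : V, i ≠ j → j ≠ k → i ≠ k → M {j, k} ≤ γ {j, k} {i} * M {i}) (i : V) :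
    ¬ Vul ⊥ M γ i := by
  rintro ⟨a, C, hC, haC, hiC, hlt⟩
  rw [nbrs_bot, insert_empty_eq] at hC
  obtain rfl := subset_singleton_iff.1 hC |>.resolve_left (ne_empty_of_mem haC)
  exact (strength_singleton_le hV hM0 hMmono hγpos hγ1 hγ2 H (ne_of_mem_of_not_mem haC hiC)
    (mem_insert_self _ _)).not_gt hlt

lemma not_vul_addE_bot (hV : 3 ≤ Fintype.card V)
    (hM0 : ∀ C : Finset V, C.Nonempty → 0 ≤ M C)
    (hMmono : ∀ C C' : Finset V, C ⊆ C' → M C ≤ M C')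
    (hγpos : ∀ C C' : Finset V, 0 < γ C C')
    (hγ1 : ∀ C C'' D : Finset V, C ⊆ C'' → γ C'' D ≤ γ C D)
    (hγ2 : ∀ C D D' : Finset V, D' ⊆ D → γ C D' ≤ γ C D)
    (H : ∀ i j k : V, i ≠ j → j ≠ k → i ≠ k → M {j, k} ≤ γ {j, k} {i} * M {i})
    {j k : V} (hjk : j ≠ k) (i : V) : ¬ Vul (addE ⊥ j k) M γ i := by
  rintro ⟨a, C, hC, haC, hiC, hlt⟩
  obtain rfl | rfl := eq_singleton_or_eq_pair_of_subset_addE_bot hC haC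
  · exact (strength_singleton_le hV hM0 hMmono hγpos hγ1 hγ2 H (ne_of_mem_of_not_mem haC hiC)
      (mem_insert_self _ _)).not_gt hlt
  · have hij : i ≠ j := by rintro rfl; simp at hiC
    have hik : i ≠ k := by rintro rfl; simp at hiC
    rw [nbrs_addE_bot_of_ne hij hik, empty_sdiff, insert_empty_eq] at hlt
    exact (H i j k hij hjk hik).not_gt hlt

end Strength

/-- The empty network is war-stable iff `M {j,k} ≤ γ({j,k},{i}) · M i` for all
distinct `i, j, k`. -/
theorem empty_war_stable_iff {n : ℕ} (hn : 3 ≤ n)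
    (M : Finset (Fin n) → ℝ) (γ : Finset (Fin n) → Finset (Fin n) → ℝ)
    (hM0 : ∀ C : Finset (Fin n), C.Nonempty → 0 ≤ M C)
    (hMmono : ∀ C C' : Finset (Fin n), C ⊆ C' → M C ≤ M C')
    (hγpos : ∀ C C' : Finset (Fin n), 0 < γ C C')
    (hγ1 : ∀ C C'' D : Finset (Fin n), C ⊆ C'' → γ C'' D ≤ γ C D)
    (hγ2 : ∀ C D D' : Finset (Fin n), D' ⊆ D → γ C D' ≤ γ C D) :
    WarStable (⊥ : SimpleGraph (Fin n)) M γ ↔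
      ∀ i j k : Fin n, i ≠ j → j ≠ k → i ≠ k →
        M {j, k} ≤ γ {j, k} {i} * M {i} := by
  have hV : 3 ≤ Fintype.card (Fin n) := by simpa using hn
  constructor
  · rintro ⟨-, hS2, -⟩ i j k hij hjk hik
    by_contra! hlt
    exact hS2 j k hjk (by simp) i (vul_addE_bot_of_lt hij hjk hik hlt)
  · intro H
    refine ⟨not_vul_bot hV hM0 hMmono hγpos hγ1 hγ2 H,
      fun j k hjk _ => not_vul_addE_bot hV hM0 hMmono hγpos hγ1 hγ2 H hjk, ?_⟩
    rintro j k ⟨⟩
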